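/- Let G be a finite abelian group and F_q a field with char(F_q) ∤ |G|. If e, e' are primitive idempotents of F_q G and ψ ∈ Aut(G) has linear extension mapping e to e', then ψ(H_e) = H_{e'}, where H_e denotes the unique co-cyclic subgroup associated to e; i.e., H_e and H_{e'} are G-isomorphic. -/

import Mathlib

open scoped Classical

/-- `hat F H` is the element `Ĥ = (1/|H|) ∑_{h ∈ H} h` of the group algebra `F G`. -/
noncomputable def hat (F : Type) [Field F] {G : Type} [Group G] [Fintype G]
    (H : Subgroup G) : MonoidAlgebra F G :=
  (Nat.card H : F)⁻¹ • ∑ h ∈ (H : Set G).toFinset, MonoidAlgebra.single h (1 : F)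

/-- The `p`-primary (Sylow) component of a commutative group `G`:
the subgroup of elements of `p`-power order. -/
def pComp (G : Type) [CommGroup G] (p : ℕ) : Subgroup G where
  carrier := {x | ∃ n : ℕ, x ^ p ^ n = 1}
  one_mem' := ⟨0, one_pow _⟩
  mul_mem' := by
    rintro a b ⟨m, hm⟩ ⟨k, hk⟩
    refine ⟨m + k, ?_⟩
    have ha : a ^ p ^ (m + k) = 1 := by rw [pow_add, pow_mul, hm, one_pow]
    have hb : b ^ p ^ (m + k) = 1 := by rw [add_comm, pow_add, pow_mul, hk, one_pow]
    rw [mul_pow, ha, hb, one_mul]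
  inv_mem' := by rintro a ⟨m, hm⟩; exact ⟨m, by rw [inv_pow, hm, inv_one]⟩

/-- `H` is a co-cyclic subgroup of `G`: the quotient `G/H` is a nontrivial cyclic group. -/
def Cocyclic {G : Type} [CommGroup G] (H : Subgroup G) : Prop :=
  IsCyclic (G ⧸ H) ∧ Nontrivial (G ⧸ H)

/-- `K` is a co-cyclic subgroup of the subgroup `A`. -/
def CocyclicIn {G : Type} [CommGroup G] (K A : Subgroup G) : Prop :=
  K ≤ A ∧ IsCyclic (↥A ⧸ K.subgroupOf A) ∧ Nontrivial (↥A ⧸ K.subgroupOf A)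

/-- `sharp` assigns to each co-cyclic subgroup `K` of a Sylow subgroup `G_p` the unique
subgroup `K♯` with `K ≤ K♯ ≤ G_p` and `[K♯ : K] = p`. -/
def IsSharp {G : Type} [CommGroup G] [Fintype G] (sharp : Subgroup G → Subgroup G) : Prop :=
  ∀ p ∈ (Fintype.card G).primeFactors, ∀ K : Subgroup G, CocyclicIn K (pComp G p) →
    (K ≤ sharp K ∧ sharp K ≤ pComp G p ∧ K.relIndex (sharp K) = p) ∧
    ∀ L : Subgroup G, K ≤ L → L ≤ pComp G p → K.relIndex L = p → L = sharp K

/-- The idempotent `e_H` associated to a co-cyclic subgroup `H` of a finite abelian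
group `G`: the product over the primes `p` dividing `|G|` of `Ĝ_p` (if `H_p = G_p`) or
`Ĥ_p − Ĥ_p♯` (otherwise), where `H_p = H ∩ G_p` is the `p`-Sylow component of `H`. -/
noncomputable def eH (F : Type) [Field F] {G : Type} [CommGroup G] [Fintype G]
    (sharp : Subgroup G → Subgroup G) (H : Subgroup G) : MonoidAlgebra F G :=
  ∏ p ∈ (Fintype.card G).primeFactors,
    if pComp G p ⊓ H = pComp G p then hat F (pComp G p)
    else hat F (pComp G p ⊓ H) - hat F (sharp (pComp G p ⊓ H))

/-- `e` is a primitive idempotent: a nonzero idempotent which is not the sum of two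
nonzero orthogonal idempotents. -/
def IsPrimIdem {R : Type} [Ring R] (e : R) : Prop :=
  e ≠ 0 ∧ e * e = e ∧
    ∀ a b : R, a * a = a → b * b = b → a * b = 0 → b * a = 0 → e = a + b →
      a = 0 ∨ b = 0

/-!
The linear extension of `ψ` maps `e_H` to `e_{ψ(H)}`: `ψ` fixes every Sylow component `G_p`, and
by the uniqueness in `IsSharp` it commutes with `♯`. Hence `e' = ψ(e)` is absorbed both by
`e_{H_{e'}}` and by `e_{ψ(H_e)}`, and it suffices that `e_H e_{H'} = 0` for co-cyclic `H ≠ H'`.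

Since `Â B̂ = (A ⊔ B)^`, this reduces to a prime `p` at which the components `K = G_p ∩ H` and
`K' = G_p ∩ H'` differ, say `K' ⊄ K`. Every subgroup `L ≤ G_p` strictly containing `K` contains
a subgroup of index `p` over `K`, which by uniqueness is `K♯`; so `K♯ ⊔ L = K ⊔ L`, and
`(K̂ - K♯^) L̂ = 0` for every `L ≤ G_p` not contained in `K`, in particular for `K'` and `K'♯`.
-/

section Hat

variable {F : Type} [Field F] {G : Type} [CommGroup G] [Fintype G]

lemma natCard_subgroup_ne_zero (hG : (Fintype.card G : F) ≠ 0) (H : Subgroup G) :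
    (Nat.card H : F) ≠ 0 := by
  obtain ⟨k, hk⟩ := H.card_subgroup_dvd_card
  intro hH
  rw [← Nat.card_eq_fintype_card, hk, Nat.cast_mul, hH, zero_mul] at hG
  exact hG rfl

lemma hat_eq_sum (H : Subgroup G) :
    hat F H = (Nat.card H : F)⁻¹ • ∑ h : H, MonoidAlgebra.single (h : G) (1 : F) := by
  rw [hat, Finset.sum_subtype _ (fun _ => Set.mem_toFinset)]
  rfl

lemma single_mul_hat {H : Subgroup G} {g : G} (hg : g ∈ H) :
    MonoidAlgebra.single g (1 : F) * hat F H = hat F H := by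
  simp only [hat_eq_sum, mul_smul_comm, Finset.mul_sum, MonoidAlgebra.single_mul_single, one_mul]
  congr 1
  exact Fintype.sum_equiv (Equiv.mulLeft (⟨g, hg⟩ : H)) _ _ fun _ => rfl

lemma hat_mul_of_forall_single_mul {H : Subgroup G} (hH : (Nat.card H : F) ≠ 0)
    {x : MonoidAlgebra F G} (hx : ∀ g ∈ H, MonoidAlgebra.single g (1 : F) * x = x) :
    hat F H * x = x := by
  simp only [hat_eq_sum, smul_mul_assoc, Finset.sum_mul]
  rw [Finset.sum_congr rfl fun (h : H) _ => hx h h.2, Finset.sum_const, Finset.card_univ,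
    ← Nat.card_eq_fintype_card, ← Nat.cast_smul_eq_nsmul F, smul_smul, inv_mul_cancel₀ hH,
    one_smul]

lemma hat_mul_hat (hG : (Fintype.card G : F) ≠ 0) (A B : Subgroup G) :
    hat F A * hat F B = hat F (A ⊔ B) := by
  have hinv : ∀ g ∈ A ⊔ B,
      MonoidAlgebra.single g (1 : F) * (hat F A * hat F B) = hat F A * hat F B := by
    intro g hg
    obtain ⟨a, ha, b, hb, rfl⟩ := Subgroup.mem_sup.1 hg
    rw [← one_mul (1 : F), ← MonoidAlgebra.single_mul_single, mul_mul_mul_comm,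
      single_mul_hat ha, single_mul_hat hb]
  have habsorb : ∀ {C D : Subgroup G}, C ≤ D → hat F C * hat F D = hat F D := fun hCD =>
    hat_mul_of_forall_single_mul (natCard_subgroup_ne_zero hG _) fun _ hg =>
      single_mul_hat (hCD hg)
  calc hat F A * hat F B = hat F (A ⊔ B) * (hat F A * hat F B) :=
        (hat_mul_of_forall_single_mul (natCard_subgroup_ne_zero hG _) hinv).symm
    _ = hat F (A ⊔ B) := by
        rw [← mul_assoc, mul_comm (hat F (A ⊔ B)), habsorb le_sup_left, mul_comm,
          habsorb le_sup_right]

lemma domCongr_hat (ψ : G ≃* G) (H : Subgroup G) :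
    MonoidAlgebra.domCongr F F ψ (hat F H) = hat F (H.map ψ.toMonoidHom) := by
  let φ := H.equivMapOfInjective ψ.toMonoidHom ψ.injective
  simp only [hat_eq_sum, map_smul, map_sum, MonoidAlgebra.domCongr_single]
  rw [← Nat.card_congr φ.toEquiv]
  congr 1
  exact Fintype.sum_equiv φ.toEquiv _ _ fun _ => rfl

end Hat

lemma Subgroup.mem_of_pow_mem_of_coprime {G : Type} [Group G] {K : Subgroup G} {x : G}
    {a b : ℕ} (hab : a.Coprime b) (ha : x ^ a ∈ K) (hb : x ^ b ∈ K) : x ∈ K := by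
  have hbezout : x = (x ^ a) ^ a.gcdA b * (x ^ b) ^ a.gcdB b := by
    rw [← zpow_natCast, ← zpow_natCast, ← zpow_mul, ← zpow_mul, ← zpow_add,
      ← Nat.gcd_eq_gcd_ab, hab.gcd_eq_one, Nat.cast_one, zpow_one]
  rw [hbezout]
  exact K.mul_mem (K.zpow_mem ha _) (K.zpow_mem hb _)

lemma IsPGroup.exists_relIndex_eq_of_lt {G : Type} [Group G] [Finite G] {p : ℕ} [Fact p.Prime]
    {K L : Subgroup G} (hL : IsPGroup p L) (hKL : K < L) :
    ∃ M : Subgroup G, K ≤ M ∧ M ≤ L ∧ K.relIndex M = p := by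
  have card_mul_relIndex {A B : Subgroup G} (hAB : A ≤ B) :
      Nat.card A * A.relIndex B = Nat.card B := by
    rw [← Subgroup.relIndex_bot_left, ← Subgroup.relIndex_bot_left]
    exact Subgroup.relIndex_mul_relIndex _ _ _ bot_le hAB
  have hcardK := card_mul_relIndex hKL.le
  obtain ⟨n, hn⟩ := (hL.to_le hKL.le).exists_card_eq
  obtain ⟨m, hm⟩ := hL.exists_card_eq
  obtain ⟨j, -, hj⟩ := (Nat.dvd_prime_pow Fact.out).1 (Dvd.intro_left _ (hcardK.trans hm))
  have hj0 : j ≠ 0 := by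
    rintro rfl
    exact hKL.not_ge (Subgroup.relIndex_eq_one.1 (hj.trans (pow_zero p)))
  have hdvd : p ^ (n + 1) ∣ Nat.card L := by
    rw [← hcardK, hn, hj, pow_succ]
    exact mul_dvd_mul_left _ (dvd_pow_self p hj0)
  obtain ⟨M, hM, hKM⟩ := Sylow.exists_subgroup_card_pow_succ hdvd
    (H := K.subgroupOf L)
    (by rw [Nat.card_congr (Subgroup.subgroupOfEquivOfLe hKL.le).toEquiv, hn])
  have hKM' : K ≤ M.map L.subtype := by
    simpa [Subgroup.subgroupOf_map_subtype, inf_eq_left.2 hKL.le] using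
      Subgroup.map_mono (f := L.subtype) hKM
  refine ⟨M.map L.subtype, hKM', Subgroup.map_subtype_le M, ?_⟩
  have h := card_mul_relIndex hKM'
  rw [Subgroup.card_map_of_injective L.subtype_injective, hM, hn, pow_succ] at h
  exact Nat.eq_of_mul_eq_mul_left (pow_pos (Fact.out : p.Prime).pos n) h

section PrimaryComponents

variable {G : Type} [CommGroup G]

lemma isPGroup_pComp (p : ℕ) : IsPGroup p (pComp G p) :=
  fun ⟨_, n, hn⟩ => ⟨n, Subtype.ext hn⟩

lemma map_pComp (ψ : G ≃* G) (p : ℕ) : (pComp G p).map ψ.toMonoidHom = pComp G p := by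
  ext x
  constructor
  · rintro ⟨y, ⟨n, hy⟩, rfl⟩
    exact ⟨n, by rw [← map_pow, hy, map_one]⟩
  · rintro ⟨n, hx⟩
    exact ⟨ψ.symm x, ⟨n, by rw [← map_pow, hx, map_one]⟩, ψ.apply_symm_apply x⟩

lemma le_of_forall_pComp_inf_le [Fintype G] {H H' : Subgroup G}
    (h : ∀ p ∈ (Fintype.card G).primeFactors, pComp G p ⊓ H ≤ H') : H ≤ H' := by
  suffices key : ∀ n, 0 < n → ∀ x ∈ H, x ^ n = 1 → x ∈ H' from
    fun x hx => key _ (orderOf_pos x) x hx (pow_orderOf_eq_one x)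
  intro n
  induction n using Nat.recOnPosPrimePosCoprime with
  | zero => exact fun h0 => absurd h0 (lt_irrefl 0)
  | one =>
    intro _ x _ hx
    rw [pow_one] at hx
    rw [hx]
    exact H'.one_mem
  | prime_pow p k hp _ =>
    intro _ x hxH hx
    by_cases hpG : p ∣ Fintype.card G
    · exact h p (Nat.mem_primeFactors.2 ⟨hp, hpG, Fintype.card_ne_zero⟩) ⟨⟨k, hx⟩, hxH⟩
    · have hcop : (p ^ k).Coprime (Fintype.card G) :=
        ((Nat.Prime.coprime_iff_not_dvd hp).2 hpG).pow_left k
      rw [orderOf_eq_one_iff.1 (Nat.eq_one_of_dvd_coprimes hcop (orderOf_dvd_of_pow_eq_one hx)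
        orderOf_dvd_card)]
      exact H'.one_mem
  | coprime a b ha hb hab iha ihb =>
    intro _ x hxH hx
    refine Subgroup.mem_of_pow_mem_of_coprime hab ?_ ?_
    · exact ihb (by omega) _ (H.pow_mem hxH a) (by rw [← pow_mul, hx])
    · exact iha (by omega) _ (H.pow_mem hxH b) (by rw [← pow_mul, mul_comm, hx])

lemma exists_pComp_inf_ne [Fintype G] {H H' : Subgroup G} (hne : H ≠ H') :
    ∃ p ∈ (Fintype.card G).primeFactors, pComp G p ⊓ H ≠ pComp G p ⊓ H' := by
  by_contra! h
  exact hne (le_antisymm (le_of_forall_pComp_inf_le fun p hp => (h p hp).le.trans inf_le_right)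
    (le_of_forall_pComp_inf_le fun p hp => (h p hp).ge.trans inf_le_right))

end PrimaryComponents

section Cocyclic

variable {G : Type} [CommGroup G]

lemma Cocyclic.map {G' : Type} [CommGroup G'] {H : Subgroup G} (hH : Cocyclic H)
    (ψ : G ≃* G') : Cocyclic (H.map ψ.toMonoidHom) := by
  let φ : (G ⧸ H) ≃* (G' ⧸ H.map ψ.toMonoidHom) := QuotientGroup.congr H _ ψ rfl
  obtain ⟨hcyc, hnontriv⟩ := hH
  exact ⟨isCyclic_of_surjective φ φ.surjective, φ.symm.toEquiv.nontrivial⟩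

lemma Cocyclic.cocyclicIn_inf {H : Subgroup G} (hH : Cocyclic H) {A : Subgroup G}
    (hA : A ⊓ H ≠ A) : CocyclicIn (A ⊓ H) A := by
  have hcyc := hH.1
  let φ : A →* G ⧸ H := (QuotientGroup.mk' H).comp A.subtype
  have hker : φ.ker = (A ⊓ H).subgroupOf A := by
    ext x
    simp [φ, Subgroup.mem_subgroupOf, QuotientGroup.eq_one_iff]
  refine ⟨inf_le_left, ?_, ?_⟩
  · have := isCyclic_of_injective _ (QuotientGroup.kerLift_injective φ)
    exact isCyclic_of_surjective _ (QuotientGroup.quotientMulEquivOfEq hker).surjective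
  · rw [QuotientGroup.nontrivial_iff, Ne, Subgroup.subgroupOf_eq_top]
    exact fun h => hA (le_antisymm inf_le_left h)

end Cocyclic

section Sharp

variable {G : Type} [CommGroup G] [Fintype G] {sharp : Subgroup G → Subgroup G} {p : ℕ}

lemma IsSharp.le_of_lt (hsharp : IsSharp sharp) (hp : p ∈ (Fintype.card G).primeFactors)
    {K L : Subgroup G} (hK : CocyclicIn K (pComp G p)) (hKL : K < L) (hLP : L ≤ pComp G p) :
    sharp K ≤ L := by
  have : Fact p.Prime := ⟨Nat.prime_of_mem_primeFactors hp⟩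
  obtain ⟨M, hKM, hML, hM⟩ := ((isPGroup_pComp p).to_le hLP).exists_relIndex_eq_of_lt hKL
  exact (hsharp p hp K hK).2 M hKM (hML.trans hLP) hM ▸ hML

lemma IsSharp.sup_eq (hsharp : IsSharp sharp) (hp : p ∈ (Fintype.card G).primeFactors)
    {K L : Subgroup G} (hK : CocyclicIn K (pComp G p)) (hLP : L ≤ pComp G p) (hLK : ¬ L ≤ K) :
    sharp K ⊔ L = K ⊔ L :=
  le_antisymm (sup_le (hsharp.le_of_lt hp hK (left_lt_sup.2 hLK) (sup_le hK.1 hLP)) le_sup_right)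
    (sup_le_sup_right (hsharp p hp K hK).1.1 L)

lemma IsSharp.map (hsharp : IsSharp sharp) (hp : p ∈ (Fintype.card G).primeFactors)
    (ψ : G ≃* G) {K : Subgroup G} (hK : CocyclicIn K (pComp G p))
    (hK' : CocyclicIn (K.map ψ.toMonoidHom) (pComp G p)) :
    (sharp K).map ψ.toMonoidHom = sharp (K.map ψ.toMonoidHom) := by
  obtain ⟨⟨hle, hleP, hidx⟩, -⟩ := hsharp p hp K hK
  refine (hsharp p hp _ hK').2 _ (Subgroup.map_mono hle) ?_ ?_
  · rw [← map_pComp ψ p]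
    exact Subgroup.map_mono hleP
  · rw [Subgroup.relIndex_map_map_of_injective _ _ ψ.injective, hidx]

end Sharp

section Idempotents

variable {F : Type} [Field F] {G : Type} [CommGroup G] [Fintype G]
  {sharp : Subgroup G → Subgroup G} {p : ℕ}

variable (F sharp p) in
noncomputable def eHFactor (H : Subgroup G) : MonoidAlgebra F G :=
  if pComp G p ⊓ H = pComp G p then hat F (pComp G p)
  else hat F (pComp G p ⊓ H) - hat F (sharp (pComp G p ⊓ H))

lemma eH_eq_prod_eHFactor (H : Subgroup G) :
    eH F sharp H = ∏ p ∈ (Fintype.card G).primeFactors, eHFactor F sharp p H := rfl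

lemma hat_sub_hat_sharp_mul_hat (hG : (Fintype.card G : F) ≠ 0) (hsharp : IsSharp sharp)
    (hp : p ∈ (Fintype.card G).primeFactors) {K L : Subgroup G} (hK : CocyclicIn K (pComp G p))
    (hLP : L ≤ pComp G p) (hLK : ¬ L ≤ K) :
    (hat F K - hat F (sharp K)) * hat F L = 0 := by
  rw [sub_mul, hat_mul_hat hG, hat_mul_hat hG, hsharp.sup_eq hp hK hLP hLK, sub_self]

lemma eHFactor_mul_eq_zero (hG : (Fintype.card G : F) ≠ 0) (hsharp : IsSharp sharp)
    (hp : p ∈ (Fintype.card G).primeFactors) {H H' : Subgroup G} (hH : Cocyclic H)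
    (hH' : Cocyclic H') (hne : pComp G p ⊓ H ≠ pComp G p ⊓ H') :
    eHFactor F sharp p H * eHFactor F sharp p H' = 0 := by
  wlog hle : ¬ pComp G p ⊓ H' ≤ pComp G p ⊓ H generalizing H H'
  · rw [mul_comm]
    exact this hH' hH hne.symm fun h => hne (le_antisymm h (not_not.1 hle))
  have hHP : pComp G p ⊓ H ≠ pComp G p := fun h => hle (by rw [h]; exact inf_le_left)
  have key : ∀ L ≤ pComp G p, ¬ L ≤ pComp G p ⊓ H → eHFactor F sharp p H * hat F L = 0 :=
    fun L hLP hLK => by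
      rw [eHFactor, if_neg hHP]
      exact hat_sub_hat_sharp_mul_hat hG hsharp hp (hH.cocyclicIn_inf hHP) hLP hLK
  by_cases hH'P : pComp G p ⊓ H' = pComp G p
  · rw [show eHFactor F sharp p H' = hat F (pComp G p) from if_pos hH'P]
    exact key _ le_rfl (by rwa [hH'P] at hle)
  · obtain ⟨⟨hle', hleP', -⟩, -⟩ := hsharp p hp _ (hH'.cocyclicIn_inf hH'P)
    rw [show eHFactor F sharp p H' = hat F (pComp G p ⊓ H') - hat F (sharp (pComp G p ⊓ H'))
      from if_neg hH'P, mul_sub, key _ inf_le_left hle,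
      key _ hleP' fun h => hle (hle'.trans h), sub_zero]

lemma eH_mul_eq_zero (hG : (Fintype.card G : F) ≠ 0) (hsharp : IsSharp sharp)
    {H H' : Subgroup G} (hH : Cocyclic H) (hH' : Cocyclic H') (hne : H ≠ H') :
    eH F sharp H * eH F sharp H' = 0 := by
  obtain ⟨p, hp, hpne⟩ := exists_pComp_inf_ne hne
  rw [eH_eq_prod_eHFactor, eH_eq_prod_eHFactor, ← Finset.prod_mul_distrib]
  exact Finset.prod_eq_zero hp (eHFactor_mul_eq_zero hG hsharp hp hH hH' hpne)

lemma domCongr_eHFactor (hsharp : IsSharp sharp) (hp : p ∈ (Fintype.card G).primeFactors)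
    (ψ : G ≃* G) {H : Subgroup G} (hH : Cocyclic H) :
    MonoidAlgebra.domCongr F F ψ (eHFactor F sharp p H) =
      eHFactor F sharp p (H.map ψ.toMonoidHom) := by
  have hmap : (pComp G p ⊓ H).map ψ.toMonoidHom = pComp G p ⊓ H.map ψ.toMonoidHom := by
    rw [Subgroup.map_inf _ _ _ ψ.injective, map_pComp]
  have hiff := (Subgroup.map_injective (f := ψ.toMonoidHom) ψ.injective).eq_iff
    (a := pComp G p ⊓ H) (b := pComp G p)
  rw [hmap, map_pComp] at hiff
  by_cases hc : pComp G p ⊓ H = pComp G p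
  · rw [eHFactor, eHFactor, if_pos hc, if_pos (hiff.2 hc), domCongr_hat, map_pComp]
  · have hc' := mt hiff.1 hc
    rw [eHFactor, eHFactor, if_neg hc, if_neg hc', map_sub, domCongr_hat, domCongr_hat,
      hsharp.map hp ψ (hH.cocyclicIn_inf hc) (hmap ▸ (hH.map ψ).cocyclicIn_inf hc'), hmap]

lemma domCongr_eH (hsharp : IsSharp sharp) (ψ : G ≃* G) {H : Subgroup G} (hH : Cocyclic H) :
    MonoidAlgebra.domCongr F F ψ (eH F sharp H) = eH F sharp (H.map ψ.toMonoidHom) := by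
  rw [eH_eq_prod_eHFactor, eH_eq_prod_eHFactor, map_prod]
  exact Finset.prod_congr rfl fun p hp => domCongr_eHFactor hsharp hp ψ hH

end Idempotents

theorem stmt12_general (F : Type) [Field F] (G : Type) [CommGroup G] [Fintype G]
    (hchar : ¬ (ringChar F ∣ Fintype.card G))
    (sharp : Subgroup G → Subgroup G) (hsharp : IsSharp sharp)
    (e e' : MonoidAlgebra F G) (he' : IsPrimIdem e')
    -- `He` and `He'` are the unique co-cyclic subgroups associated to `e` and `e'`
    (He He' : Subgroup G)
    (hHe : Cocyclic He ∧ e * eH F sharp He = e)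
    (hHe' : Cocyclic He' ∧ e' * eH F sharp He' = e')
    (ψ : G ≃* G) (hψ : MonoidAlgebra.domCongr F F ψ e = e') :
    He.map ψ.toMonoidHom = He' := by
  have hG : (Fintype.card G : F) ≠ 0 := (ringChar.spec F _).not.2 hchar
  by_contra hne
  have hψe' : e' * eH F sharp (He.map ψ.toMonoidHom) = e' := by
    rw [← hψ, ← domCongr_eH hsharp ψ hHe.1, ← map_mul, hHe.2]
  apply he'.1
  calc e' = e' * eH F sharp He' * eH F sharp (He.map ψ.toMonoidHom) := by rw [hHe'.2, hψe']
    _ = 0 := by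
      rw [mul_assoc, eH_mul_eq_zero hG hsharp hHe'.1 (hHe.1.map ψ) (Ne.symm hne), mul_zero]

theorem stmt12 (F : Type) [Field F] (G : Type) [CommGroup G] [Fintype G]
    (hchar : ¬ (ringChar F ∣ Fintype.card G))
    (sharp : Subgroup G → Subgroup G) (hsharp : IsSharp sharp)
    (e e' : MonoidAlgebra F G) (he : IsPrimIdem e) (he' : IsPrimIdem e')
    (hne : e ≠ hat F (⊤ : Subgroup G)) (hne' : e' ≠ hat F (⊤ : Subgroup G))
    -- `He` and `He'` are the unique co-cyclic subgroups associated to `e` and `e'`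
    (He He' : Subgroup G)
    (hHe : Cocyclic He ∧ e * eH F sharp He = e)
    (hHe' : Cocyclic He' ∧ e' * eH F sharp He' = e')
    (ψ : G ≃* G) (hψ : MonoidAlgebra.domCongr F F ψ e = e') :
    He.map ψ.toMonoidHom = He' :=
  stmt12_general F G hchar sharp hsharp e e' he' He He' hHe hHe' ψ hψ
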